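/- arXiv:2512.23468 — 4 statements merged into one kernel-verified Lean document; each statement's English description precedes it below -/
import Mathlib

section
/- Intersection of minimum s-t cut-sets is a minimum s-t cut-set: under the same hypotheses as above, if S and S' are minimum s-t cut-sets, then S ∩ S' is also a minimum s-t cut-set. -/
open Finset
open scoped Classical

/-- The weight of the cut induced by `S`. -/
noncomputable def cutWeight {V : Type*} (E : Finset (Sym2 V)) (w : Sym2 V → ℕ)
    (S : Finset V) : ℕ :=
  ∑ e ∈ E.filter (fun e => (∃ u ∈ e, u ∈ S) ∧ ∃ u ∈ e, u ∉ S), w e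

lemma cutWeight_eq_sum_ite {V : Type*} (E : Finset (Sym2 V)) (w : Sym2 V → ℕ)
    (S : Finset V) :
    cutWeight E w S =
      ∑ e ∈ E, if (∃ u ∈ e, u ∈ S) ∧ ∃ u ∈ e, u ∉ S then w e else 0 := by
  rw [cutWeight, Finset.sum_filter]

lemma key_ite {V : Type*} [DecidableEq V] (e : Sym2 V) (S S' : Finset V) (n : ℕ) :
    ((if (∃ u ∈ e, u ∈ S ∩ S') ∧ ∃ u ∈ e, u ∉ S ∩ S' then n else 0) +
      if (∃ u ∈ e, u ∈ S ∪ S') ∧ ∃ u ∈ e, u ∉ S ∪ S' then n else 0) ≤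
    (if (∃ u ∈ e, u ∈ S) ∧ ∃ u ∈ e, u ∉ S then n else 0) +
      if (∃ u ∈ e, u ∈ S') ∧ ∃ u ∈ e, u ∉ S' then n else 0 := by
  induction e using Sym2.ind with
  | _ u v =>
    simp only [Sym2.mem_iff, Finset.mem_inter, Finset.mem_union]
    by_cases hu : u ∈ S <;> by_cases hv : v ∈ S <;> by_cases hu' : u ∈ S' <;>
      by_cases hv' : v ∈ S' <;> simp_all <;> omega

lemma cutWeight_submodular {V : Type*} [DecidableEq V] (E : Finset (Sym2 V))
    (w : Sym2 V → ℕ) (S S' : Finset V) :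
    cutWeight E w (S ∩ S') + cutWeight E w (S ∪ S') ≤
      cutWeight E w S + cutWeight E w S' := by
  simp only [cutWeight_eq_sum_ite, ← Finset.sum_add_distrib]
  exact Finset.sum_le_sum fun e _ => key_ite e S S' (w e)

/-- The intersection of two minimum s-t cut-sets is a minimum s-t cut-set. -/
theorem inter_of_min_st_cuts {V : Type*} [Fintype V] [DecidableEq V]
    (E : Finset (Sym2 V)) (w : Sym2 V → ℕ) (s t : V) (hst : s ≠ t)
    (S S' : Finset V) (hsS : s ∈ S) (hsS' : s ∈ S') (htS : t ∉ S) (htS' : t ∉ S')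
    (hminS : ∀ A : Finset V, s ∈ A → t ∉ A → cutWeight E w S ≤ cutWeight E w A)
    (hminS' : ∀ A : Finset V, s ∈ A → t ∉ A → cutWeight E w S' ≤ cutWeight E w A) :
    s ∈ S ∩ S' ∧ t ∉ S ∩ S' ∧
      ∀ A : Finset V, s ∈ A → t ∉ A → cutWeight E w (S ∩ S') ≤ cutWeight E w A := by
  refine ⟨Finset.mem_inter.mpr ⟨hsS, hsS'⟩, fun h => htS (Finset.mem_inter.mp h).1,
    fun A hsA htA => ?_⟩
  have hU : cutWeight E w S ≤ cutWeight E w (S ∪ S') :=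
    hminS _ (Finset.mem_union_left _ hsS) (by simp [htS, htS'])
  have hsub := cutWeight_submodular E w S S'
  have h1 := hminS' A hsA htA
  omega
end

section
/- For a graph containing the star at s with stitched weights [w, w_s], if S₁ and S₂ are two distinct global minimum cut-sets both containing s (minimizing [w,w_s](cut(S)) over all nonempty proper S ⊆ V), then their complements are disjoint: (V ∖ S₁) ∩ (V ∖ S₂) = ∅. -/
/-! For `s ∈ T` the stitched weight of the cut `T` is `(n + 1) · w(δT) + |V ∖ T|` with
`|V ∖ T| ≤ n`, so two cuts containing `s` of equal stitched weight have complements of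
equal size. If the complements of the minimum cuts `S₁` and `S₂` met, then `S₁ ∪ S₂` and
`S₁ ∩ S₂` would be admissible cuts and submodularity of the cut function would make `S₁ ∪ S₂`
a minimum cut as well; comparing complement sizes then gives `S₁ = S₁ ∪ S₂ = S₂`. -/

open Finset
open scoped Classical

/-- Indicator weight of edges incident to `s` (the star at `s`). -/
noncomputable def starWeight {V : Type*} (s : V) : Sym2 V → ℕ :=
  fun e => if s ∈ e then 1 else 0

section CutWeight

variable {V : Type*} (E : Finset (Sym2 V))

lemma cutWeight_add (w₁ w₂ : Sym2 V → ℕ) (S : Finset V) :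
    cutWeight E (fun e => w₁ e + w₂ e) S = cutWeight E w₁ S + cutWeight E w₂ S :=
  sum_add_distrib

lemma cutWeight_const_mul (c : ℕ) (w : Sym2 V → ℕ) (S : Finset V) :
    cutWeight E (fun e => c * w e) S = c * cutWeight E w S :=
  (mul_sum _ _ _).symm

lemma cutWeight_union_add_cutWeight_inter_le [DecidableEq V] (w : Sym2 V → ℕ)
    (S T : Finset V) :
    cutWeight E w (S ∪ T) + cutWeight E w (S ∩ T) ≤ cutWeight E w S + cutWeight E w T := by
  simp only [cutWeight, sum_filter, ← sum_add_distrib]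
  refine sum_le_sum fun e _ => ?_
  induction e using Sym2.ind with
  | _ u v =>
    simp only [Sym2.mem_iff, mem_union, mem_inter]
    by_cases hu : u ∈ S <;> by_cases hv : v ∈ S <;> by_cases hu' : u ∈ T <;>
      by_cases hv' : v ∈ T <;> simp [hu, hv, hu', hv']

variable [Fintype V] [DecidableEq V] {s : V}

lemma cutWeight_starWeight (hstar : ∀ v : V, v ≠ s → s(s, v) ∈ E) {S : Finset V}
    (hs : s ∈ S) : cutWeight E (starWeight s) S = #Sᶜ := by
  unfold cutWeight starWeight
  -- `s ∈ e` is decided by `Sym2.Mem.decidable`, which matches `card_filter` only up to unfolding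
  erw [← card_filter]
  refine (card_nbij (fun v => s(s, v)) ?_ (fun a _ b _ h => Sym2.congr_right.1 h) ?_).symm
  · intro v hv
    have hvS : v ∉ S := mem_compl.1 hv
    have hvs : v ≠ s := by rintro rfl; exact hvS hs
    simp only [mem_coe, mem_filter, Sym2.mem_iff]
    exact ⟨⟨hstar v hvs, ⟨s, by simp, hs⟩, ⟨v, by simp, hvS⟩⟩, by simp⟩
  · intro e he
    simp only [mem_coe, mem_filter] at he
    obtain ⟨⟨-, -, u, hu, huS⟩, hse⟩ := he
    obtain ⟨v, rfl⟩ := Sym2.mem_iff_exists.1 hse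
    rcases Sym2.mem_iff.1 hu with rfl | rfl
    · exact absurd hs huS
    · exact ⟨u, by simpa using huS, rfl⟩

lemma cutWeight_stitched (hstar : ∀ v : V, v ≠ s → s(s, v) ∈ E) (c : ℕ)
    (w : Sym2 V → ℕ) {S : Finset V} (hs : s ∈ S) :
    cutWeight E (fun e => c * w e + starWeight s e) S = c * cutWeight E w S + #Sᶜ := by
  rw [cutWeight_add, cutWeight_const_mul, cutWeight_starWeight E hstar hs]

lemma card_compl_eq_of_cutWeight_stitched_eq (hstar : ∀ v : V, v ≠ s → s(s, v) ∈ E)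
    {c : ℕ} (hc : Fintype.card V < c) (w : Sym2 V → ℕ) {S T : Finset V} (hS : s ∈ S)
    (hT : s ∈ T)
    (h : cutWeight E (fun e => c * w e + starWeight s e) S =
      cutWeight E (fun e => c * w e + starWeight s e) T) :
    #Sᶜ = #Tᶜ := by
  have hmod {U : Finset V} (hU : s ∈ U) :
      cutWeight E (fun e => c * w e + starWeight s e) U % c = #Uᶜ := by
    rw [cutWeight_stitched E hstar c w hU, mul_comm,
      Nat.mul_add_mod_of_lt ((card_le_univ _).trans_lt hc)]
  rw [← hmod hS, ← hmod hT, h]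

end CutWeight

lemma Finset.eq_of_subset_of_card_compl_le {α : Type*} [Fintype α] [DecidableEq α]
    {S T : Finset α} (hST : S ⊆ T) (h : #Sᶜ ≤ #Tᶜ) : S = T :=
  compl_injective (eq_of_subset_of_card_le (compl_subset_compl.2 hST) h).symm

theorem min_cuts_disjoint_complements_general {V : Type*} [Fintype V] [DecidableEq V]
    (E : Finset (Sym2 V)) (w : Sym2 V → ℕ) (s : V)
    (hstar : ∀ v : V, v ≠ s → s(s, v) ∈ E)
    (S₁ S₂ : Finset V) (hs₁ : s ∈ S₁) (hs₂ : s ∈ S₂)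
    (hpr₁ : S₁ ≠ Finset.univ)
    (hpr₂ : S₂ ≠ Finset.univ)
    (hmin₁ : ∀ T : Finset V, T.Nonempty → T ≠ Finset.univ →
      cutWeight E (fun e => (Fintype.card V + 1) * w e + starWeight s e) S₁ ≤
        cutWeight E (fun e => (Fintype.card V + 1) * w e + starWeight s e) T)
    (hmin₂ : ∀ T : Finset V, T.Nonempty → T ≠ Finset.univ →
      cutWeight E (fun e => (Fintype.card V + 1) * w e + starWeight s e) S₂ ≤
        cutWeight E (fun e => (Fintype.card V + 1) * w e + starWeight s e) T)
    (hdist : S₁ ≠ S₂) :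
    (Finset.univ \ S₁) ∩ (Finset.univ \ S₂) = ∅ := by
  set W := cutWeight E (fun e => (Fintype.card V + 1) * w e + starWeight s e)
  rw [← sdiff_union_distrib, sdiff_eq_empty_iff_subset, univ_subset_iff]
  by_contra hU
  have hI : S₁ ∩ S₂ ≠ univ := fun h => hpr₁ (univ_subset_iff.1 (h ▸ inter_subset_left))
  have hsU : s ∈ S₁ ∪ S₂ := mem_union_left S₂ hs₁
  have hW₁₂ : W S₁ = W S₂ :=
    le_antisymm (hmin₁ S₂ ⟨s, hs₂⟩ hpr₂) (hmin₂ S₁ ⟨s, hs₁⟩ hpr₁)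
  have hWU : W (S₁ ∪ S₂) = W S₁ := by
    have : W (S₁ ∪ S₂) + W (S₁ ∩ S₂) ≤ W S₁ + W S₂ :=
      cutWeight_union_add_cutWeight_inter_le E _ S₁ S₂
    have := hmin₁ (S₁ ∪ S₂) ⟨s, hsU⟩ hU
    have := hmin₁ (S₁ ∩ S₂) ⟨s, mem_inter.2 ⟨hs₁, hs₂⟩⟩ hI
    omega
  have h₁ : S₁ = S₁ ∪ S₂ := eq_of_subset_of_card_compl_le subset_union_left <|
    (card_compl_eq_of_cutWeight_stitched_eq E hstar (Nat.lt_add_one _) w hs₁ hsU hWU.symm).le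
  have h₂ : S₂ = S₁ ∪ S₂ := eq_of_subset_of_card_compl_le subset_union_right <|
    (card_compl_eq_of_cutWeight_stitched_eq E hstar (Nat.lt_add_one _) w hs₂ hsU
      (hWU.trans hW₁₂).symm).le
  exact hdist (h₁.trans h₂.symm)

/-- Distinct global minimum cut-sets (under star-stitched weights) containing `s`
have disjoint complements. -/
theorem min_cuts_disjoint_complements {V : Type*} [Fintype V] [DecidableEq V]
    (E : Finset (Sym2 V)) (w : Sym2 V → ℕ) (s : V)
    (hstar : ∀ v : V, v ≠ s → s(s, v) ∈ E)
    (S₁ S₂ : Finset V) (hs₁ : s ∈ S₁) (hs₂ : s ∈ S₂)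
    (hne₁ : S₁.Nonempty) (hpr₁ : S₁ ≠ Finset.univ)
    (hne₂ : S₂.Nonempty) (hpr₂ : S₂ ≠ Finset.univ)
    (hmin₁ : ∀ T : Finset V, T.Nonempty → T ≠ Finset.univ →
      cutWeight E (fun e => (Fintype.card V + 1) * w e + starWeight s e) S₁ ≤
        cutWeight E (fun e => (Fintype.card V + 1) * w e + starWeight s e) T)
    (hmin₂ : ∀ T : Finset V, T.Nonempty → T ≠ Finset.univ →
      cutWeight E (fun e => (Fintype.card V + 1) * w e + starWeight s e) S₂ ≤
        cutWeight E (fun e => (Fintype.card V + 1) * w e + starWeight s e) T)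
    (hdist : S₁ ≠ S₂) :
    (Finset.univ \ S₁) ∩ (Finset.univ \ S₂) = ∅ :=
  min_cuts_disjoint_complements_general E w s hstar S₁ S₂ hs₁ hs₂ hpr₁ hpr₂ hmin₁ hmin₂ hdist
end

section
/- Binary search case 1: let S₁,…,S_k (all containing s) be the global minimum cut-sets of G' under [w, w_s], let T_i = V∖S_i, let 𝒯 = ∪_i T_i with maximum element t_max (vertices identified with {1,…,n}). Define w_s^{<x}(e) = 1 if e = (s,v) with v < x, else 0, and the triple-stitched weight [w, w_s, w_s^{<x}]. If x > t_max, then every cut-set S containing s that minimizes [w, w_s, w_s^{<x}](cut(·)) over nonempty proper subsets satisfies w_s^{<x}(cut(S)) = |V∖S|. -/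
open Finset
open scoped Classical

/-- Indicator weight of star edges `(s, v)` with `v < x`. -/
noncomputable def ltWeight {V : Type*} [LT V] (s x : V) : Sym2 V → ℕ :=
  fun e => if ∃ v : V, v < x ∧ e = Sym2.mk s v then 1 else 0

/-- `S` is a global minimum cut-set of `(V, E)` with respect to the weights `f`. -/
def IsMinCutSet {V : Type*} [Fintype V] (E : Finset (Sym2 V)) (f : Sym2 V → ℕ)
    (S : Finset V) : Prop :=
  S.Nonempty ∧ S ≠ Finset.univ ∧ ∀ T : Finset V, T.Nonempty → T ≠ Finset.univ →
    cutWeight E f S ≤ cutWeight E f T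

/-- The stitched weight `[w, w_s]` (with bound `n = |V|`). -/
noncomputable def stitch1 {V : Type*} [Fintype V] (w : Sym2 V → ℕ) (s : V) :
    Sym2 V → ℕ :=
  fun e => (Fintype.card V + 1) * w e + starWeight s e

/-- The triple-stitched weight `[w, w_s, w_s^{<x}]` (with bound `n = |V|`). -/
noncomputable def stitch2 {V : Type*} [Fintype V] [LT V] (w : Sym2 V → ℕ) (s x : V) :
    Sym2 V → ℕ :=
  fun e => (Fintype.card V + 1) * stitch1 w s e + ltWeight s x e

/-!
Every cut has `w_s^{<x}`-weight at most `n < n + 1`, so the last layer of stitching cannot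
outweigh a unit of `[w, w_s]`: a minimizer `S` of the triple-stitched weight is a global minimum
cut-set for `[w, w_s]`. Hence every vertex outside `S` lies below `x`, and each star edge `s(s, v)`
with `v ∉ S` is cut and counted by `w_s^{<x}`.
-/

lemma cutWeight_mul_add {V : Type*} (E : Finset (Sym2 V)) (f g : Sym2 V → ℕ) (a : ℕ)
    (S : Finset V) :
    cutWeight E (fun e => a * f e + g e) S = a * cutWeight E f S + cutWeight E g S := by
  simp only [cutWeight, sum_add_distrib, mul_sum]

/-- Stitching preserves minimality: the lower layer `g` cannot outweigh one unit of `f`. -/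
lemma IsMinCutSet.of_mul_add {V : Type*} [Fintype V] {E : Finset (Sym2 V)}
    {f g : Sym2 V → ℕ} {a : ℕ} {S : Finset V} (hg : ∀ T, cutWeight E g T < a)
    (hS : IsMinCutSet E (fun e => a * f e + g e) S) : IsMinCutSet E f S := by
  obtain ⟨hne, hnu, hmin⟩ := hS
  refine ⟨hne, hnu, fun T hT hTu => Nat.le_of_lt_succ (lt_of_mul_lt_mul_left ?_ a.zero_le)⟩
  calc a * cutWeight E f S
      ≤ a * cutWeight E f S + cutWeight E g S := Nat.le_add_right _ _
    _ ≤ a * cutWeight E f T + cutWeight E g T := by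
        simpa only [cutWeight_mul_add] using hmin T hT hTu
    _ < a * (cutWeight E f T + 1) := by rw [mul_add_one]; exact Nat.add_lt_add_left (hg T) _

/-- The edge `s(s, v)` crosses `T` exactly when `v ∈ T ↔ s ∉ T`. -/
lemma cutWeight_ltWeight {V : Type*} [Fintype V] [LT V] (E : Finset (Sym2 V)) (s x : V)
    (T : Finset V) :
    cutWeight E (ltWeight s x) T = #{v | v < x ∧ s(s, v) ∈ E ∧ (v ∈ T ↔ s ∉ T)} := by
  have himage : image (s(s, ·)) {v | v < x ∧ s(s, v) ∈ E ∧ (v ∈ T ↔ s ∉ T)} =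
      {e ∈ {e ∈ E | (∃ u ∈ e, u ∈ T) ∧ ∃ u ∈ e, u ∉ T} | ∃ v < x, e = s(s, v)} := by
    ext e
    simp only [mem_filter, mem_image, mem_univ, true_and]
    constructor
    · rintro ⟨v, ⟨hvx, he, hvT⟩, rfl⟩
      refine ⟨⟨he, ?_⟩, v, hvx, rfl⟩
      by_cases hs : s ∈ T
      · exact ⟨⟨s, Sym2.mem_mk_left s v, hs⟩, v, Sym2.mem_mk_right s v, fun hv => hvT.mp hv hs⟩
      · exact ⟨⟨v, Sym2.mem_mk_right s v, hvT.mpr hs⟩, s, Sym2.mem_mk_left s v, hs⟩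
    · rintro ⟨⟨he, ⟨u, hu, huT⟩, u', hu', hu'T⟩, v, hvx, rfl⟩
      rw [Sym2.mem_iff] at hu hu'
      refine ⟨v, ⟨hvx, he, ?_⟩, rfl⟩
      rcases hu with rfl | rfl <;> rcases hu' with rfl | rfl <;> tauto
  rw [← card_image_of_injective _ fun _ _ => (Sym2.congr_right (a := s)).mp, himage, card_filter,
    cutWeight]
  unfold ltWeight
  congr!

lemma cutWeight_ltWeight_le_card {V : Type*} [Fintype V] [LT V] (E : Finset (Sym2 V))
    (s x : V) (T : Finset V) : cutWeight E (ltWeight s x) T ≤ Fintype.card V :=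
  (cutWeight_ltWeight E s x T).trans_le (card_filter_le _ _)

/-- Binary search, case 1: if x exceeds every vertex separated from s by some
global minimum cut (under the stitched weights), then every minimizer S (with s ∈ S) of the
triple-stitched cut weight satisfies w_s^{<x}(cut(S)) = |V ∖ S|. -/
theorem binary_search_case_one (n : ℕ) (E : Finset (Sym2 (Fin n)))
    (w : Sym2 (Fin n) → ℕ) (s : Fin n)
    (hstar : ∀ v : Fin n, v ≠ s → Sym2.mk s v ∈ E) (x : Fin n)
    (hx : ∀ t : Fin n,
      (∃ S : Finset (Fin n), s ∈ S ∧ IsMinCutSet E (stitch1 w s) S ∧ t ∉ S) → t < x) :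
    ∀ S : Finset (Fin n), s ∈ S → IsMinCutSet E (stitch2 w s x) S →
      cutWeight E (ltWeight s x) S = (Finset.univ \ S).card := by
  intro S hsS hS
  have hS₁ : IsMinCutSet E (stitch1 w s) S :=
    IsMinCutSet.of_mul_add (fun T => Nat.lt_succ_of_le (cutWeight_ltWeight_le_card E s x T)) hS
  refine (cutWeight_ltWeight E s x S).trans (congrArg card ?_)
  ext v
  simp only [mem_filter, mem_univ, true_and, mem_sdiff, hsS, not_true_eq_false, iff_false]
  exact ⟨fun h => h.2.2,
    fun hv => ⟨hx v ⟨S, hsS, hS₁, hv⟩, hstar v (ne_of_mem_of_not_mem hsS hv).symm, hv⟩⟩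
end

section
/- Uniqueness test completeness: let G = (V,E) have weights w and suppose S and Ŝ are two distinct minimum cut-sets (both containing s). Define w₁ on G' = (V, E ∪ E_star^s) as the indicator of star edges (s,v) with v ∉ S. If S also minimizes [w, w₁](cut(·)) over nonempty proper subsets, then V∖S ⊊ V∖Ŝ; consequently, for any t ∉ S and w₂ on Ḡ = (V, E ∪ E_star^t) defined as the indicator of star edges (t,v) with v ∈ S, S does NOT minimize [w, w₂](cut(·)): indeed w₂(cut(S)) = |S| > |Ŝ| = w₂(cut(Ŝ)) and w(cut(S)) = w(cut(Ŝ)). -/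
open Finset
open scoped Classical

/-!
Since `Ŝ` is a minimum cut and `S` survives the first test, comparing `[w, w₁]` at `S` and `Ŝ`
cancels the `w`-parts and leaves `|V ∖ S| ≤ |(V ∖ S) ∩ (V ∖ Ŝ)|`, so `Ŝ ⊊ S`. In the second
test every star edge `(t, v)`, `v ∈ S`, crosses `cut(S)`, while only those with `v ∈ Ŝ` cross
`cut(Ŝ)`; as the `w`-parts agree, `Ŝ` beats `S`.
-/

theorem Sym2.mk_crosses_iff {V : Type*} (T : Finset V) (a b : V) :
    ((∃ u ∈ s(a, b), u ∈ T) ∧ ∃ u ∈ s(a, b), u ∉ T) ↔ (b ∈ T ↔ a ∉ T) := by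
  simp only [Sym2.mem_iff, exists_eq_or_imp, exists_eq_left]
  tauto

namespace cutWeight

variable {V : Type*}

theorem mul_add (G : Finset (Sym2 V)) (f g : Sym2 V → ℕ) (c : ℕ) (T : Finset V) :
    cutWeight G (fun e => c * f e + g e) T = c * cutWeight G f T + cutWeight G g T := by
  simp only [cutWeight, sum_add_distrib, mul_sum]

theorem union_ite_mem [DecidableEq (Sym2 V)] (E X : Finset (Sym2 V)) (w : Sym2 V → ℕ)
    (T : Finset V) :
    cutWeight (E ∪ X) (fun e => if e ∈ E then w e else 0) T = cutWeight E w T := by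
  rw [cutWeight, cutWeight, sum_filter, sum_filter]
  refine (sum_subset subset_union_left fun e _ he => ?_).symm.trans
    (sum_congr rfl fun e he => ?_) <;> simp [he]

variable [Fintype V] [DecidableEq V]

-- The loop `s(t, t)` never crosses a cut, so `G` need not contain it.
theorem star_indicator (G : Finset (Sym2 V)) (t : V) (p : V → Prop) [DecidablePred p]
    (T : Finset V) (hG : ∀ v ≠ t, s(t, v) ∈ G) :
    cutWeight G (fun e => if ∃ v, p v ∧ e = s(t, v) then 1 else 0) T
      = #{v | p v ∧ (v ∈ T ↔ t ∉ T)} := by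
  have hinj : Function.Injective fun v => s(t, v) := fun _ _ h => Sym2.congr_right.mp h
  rw [cutWeight, sum_boole, Nat.cast_id, filter_filter, ← card_image_of_injective _ hinj]
  congr 1
  ext e
  simp only [mem_filter, mem_image, mem_univ, true_and]
  constructor
  · rintro ⟨-, hcross, v, hv, rfl⟩
    exact ⟨v, ⟨hv, (Sym2.mk_crosses_iff T t v).mp hcross⟩, rfl⟩
  · rintro ⟨v, ⟨hv, hcross⟩, rfl⟩
    have hvt : v ≠ t := by rintro rfl; tauto
    exact ⟨hG v hvt, (Sym2.mk_crosses_iff T t v).mpr hcross, v, hv, rfl⟩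

theorem star_indicator_of_notMem (G : Finset (Sym2 V)) (t : V) (S T : Finset V)
    (hG : ∀ v ≠ t, s(t, v) ∈ G) (ht : t ∉ T) :
    cutWeight G (fun e => if ∃ v, v ∈ S ∧ e = s(t, v) then 1 else 0) T = #(S ∩ T) := by
  convert star_indicator G t (· ∈ S) T hG using 2
  · congr!
  · ext v
    simp [ht]

theorem star_indicator_compl_of_mem (G : Finset (Sym2 V)) (t : V) (S T : Finset V)
    (hG : ∀ v ≠ t, s(t, v) ∈ G) (ht : t ∈ T) :
    cutWeight G (fun e => if ∃ v, v ∉ S ∧ e = s(t, v) then 1 else 0) T = #(S ∪ T)ᶜ := by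
  rw [star_indicator G t (· ∉ S) T hG]
  congr 1
  ext v
  simp [ht]

end cutWeight

section

variable {V : Type*} [Fintype V] [DecidableEq V]

abbrev starEdges (t : V) : Finset (Sym2 V) :=
  ({v | v ≠ t} : Finset V).image fun v => s(t, v)

theorem mk_mem_union_starEdges (E : Finset (Sym2 V)) {t v : V} (h : v ≠ t) :
    s(t, v) ∈ E ∪ starEdges t :=
  mem_union_right _ (mem_image.mpr ⟨v, by simpa using h, rfl⟩)

theorem subset_and_cutWeight_eq_of_firstTest {E : Finset (Sym2 V)} {w : Sym2 V → ℕ} {s : V}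
    {S Shat : Finset V} {c : ℕ} (hc : 0 < c) (hs : s ∈ S) (hshat : s ∈ Shat)
    (hle : cutWeight E w Shat ≤ cutWeight E w S)
    (htest : cutWeight (E ∪ starEdges s)
        (fun e => c * (if e ∈ E then w e else 0) +
          (if ∃ v : V, v ∉ S ∧ e = s(s, v) then 1 else 0)) S ≤
      cutWeight (E ∪ starEdges s)
        (fun e => c * (if e ∈ E then w e else 0) +
          (if ∃ v : V, v ∉ S ∧ e = s(s, v) then 1 else 0)) Shat) :
    Shat ⊆ S ∧ cutWeight E w S = cutWeight E w Shat := by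
  have hG : ∀ v ≠ s, s(s, v) ∈ E ∪ starEdges s := fun v => mk_mem_union_starEdges E
  rw [cutWeight.mul_add, cutWeight.mul_add, cutWeight.union_ite_mem, cutWeight.union_ite_mem,
    cutWeight.star_indicator_compl_of_mem _ _ _ _ hG hs,
    cutWeight.star_indicator_compl_of_mem _ _ _ _ hG hshat, union_self] at htest
  have hcompl : (S ∪ Shat)ᶜ ⊆ Sᶜ := compl_subset_compl.mpr subset_union_left
  have hmul := Nat.mul_le_mul_left c hle
  have hcard := card_le_card hcompl
  refine ⟨?_, ?_⟩
  · have hcompl_eq := eq_of_subset_of_card_le hcompl (by omega)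
    exact union_eq_left.mp (compl_injective hcompl_eq)
  · exact le_antisymm (Nat.le_of_mul_le_mul_left (c := c) (by omega) hc) hle

end

theorem uniqueness_test_completeness_general {V : Type*} [Fintype V] [DecidableEq V]
    (E : Finset (Sym2 V)) (w : Sym2 V → ℕ) (s : V)
    (S Shat : Finset V) (hs : s ∈ S) (hshat : s ∈ Shat) (hSne : S ≠ Shat)
    (hpr : S ≠ Finset.univ)
    (hpr' : Shat ≠ Finset.univ)
    (hmin' : ∀ T : Finset V, T.Nonempty → T ≠ Finset.univ →
      cutWeight E w Shat ≤ cutWeight E w T)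
    (hstmin : ∀ T : Finset V, T.Nonempty → T ≠ Finset.univ →
      cutWeight
          (E ∪ (Finset.univ.filter (fun v => v ≠ s)).image (fun v => s(s, v)))
          (fun e => (Fintype.card V + 1) * (if e ∈ E then w e else 0) +
            (if ∃ v : V, v ∉ S ∧ e = s(s, v) then 1 else 0)) S ≤
        cutWeight
          (E ∪ (Finset.univ.filter (fun v => v ≠ s)).image (fun v => s(s, v)))
          (fun e => (Fintype.card V + 1) * (if e ∈ E then w e else 0) +
            (if ∃ v : V, v ∉ S ∧ e = s(s, v) then 1 else 0)) T) :
    (Finset.univ \ S ⊂ Finset.univ \ Shat) ∧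
      ∀ t : V, t ∉ S →
        let Gbar : Finset (Sym2 V) :=
          E ∪ (Finset.univ.filter (fun v => v ≠ t)).image (fun v => s(t, v))
        let wext : Sym2 V → ℕ := fun e => if e ∈ E then w e else 0
        let w₂ : Sym2 V → ℕ :=
          fun e => if ∃ v : V, v ∈ S ∧ e = s(t, v) then 1 else 0
        cutWeight Gbar w₂ S = S.card ∧
          cutWeight Gbar w₂ Shat = Shat.card ∧
          Shat.card < S.card ∧
          cutWeight Gbar wext S = cutWeight Gbar wext Shat ∧
          ¬ (∀ T : Finset V, T.Nonempty → T ≠ Finset.univ →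
            cutWeight Gbar (fun e => (Fintype.card V + 1) * wext e + w₂ e) S ≤
              cutWeight Gbar (fun e => (Fintype.card V + 1) * wext e + w₂ e) T) := by
  obtain ⟨hsub, hcut⟩ := subset_and_cutWeight_eq_of_firstTest (Nat.succ_pos _) hs hshat
    (hmin' S ⟨s, hs⟩ hpr) (hstmin Shat ⟨s, hshat⟩ hpr')
  have hssub : Shat ⊂ S := ssubset_of_subset_of_ne hsub hSne.symm
  refine ⟨by simpa only [compl_eq_univ_sdiff] using compl_ssubset_compl.mpr hssub, fun t ht => ?_⟩
  intro Gbar wext w₂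
  have hG : ∀ v ≠ t, s(t, v) ∈ Gbar := fun v => mk_mem_union_starEdges E
  have hw₂S : cutWeight Gbar w₂ S = #S := by
    rw [cutWeight.star_indicator_of_notMem Gbar t S S hG ht, inter_self]
  have hw₂Shat : cutWeight Gbar w₂ Shat = #Shat := by
    rw [cutWeight.star_indicator_of_notMem Gbar t S Shat hG (fun h => ht (hsub h)),
      inter_eq_right.mpr hsub]
  have hwext : cutWeight Gbar wext S = cutWeight Gbar wext Shat := by
    rw [cutWeight.union_ite_mem, cutWeight.union_ite_mem, hcut]
  have hlt : #Shat < #S := card_lt_card hssub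
  refine ⟨hw₂S, hw₂Shat, hlt, hwext, fun hmin₂ => ?_⟩
  have hle := hmin₂ Shat ⟨s, hshat⟩ hpr'
  rw [cutWeight.mul_add, cutWeight.mul_add, hwext, hw₂S, hw₂Shat] at hle
  omega

/-- Uniqueness test completeness: if S and Ŝ are two distinct minimum cut-sets of G
(both containing s) and S survives the first test (it minimizes the stitched weight
[w, w₁] on G' = (V, E ∪ E_star^s)), then V ∖ S ⊊ V ∖ Ŝ; consequently, for every
t ∉ S, S fails the second test on Ḡ = (V, E ∪ E_star^t) with w₂ the indicator of
star edges (t, v) with v ∈ S: indeed w₂(cut(S)) = |S| > |Ŝ| = w₂(cut(Ŝ)) while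
w(cut(S)) = w(cut(Ŝ)), so S does not minimize [w, w₂]. -/
theorem uniqueness_test_completeness {V : Type*} [Fintype V] [DecidableEq V]
    (E : Finset (Sym2 V)) (w : Sym2 V → ℕ) (s : V)
    (S Shat : Finset V) (hs : s ∈ S) (hshat : s ∈ Shat) (hSne : S ≠ Shat)
    (hne : S.Nonempty) (hpr : S ≠ Finset.univ)
    (hne' : Shat.Nonempty) (hpr' : Shat ≠ Finset.univ)
    (hmin : ∀ T : Finset V, T.Nonempty → T ≠ Finset.univ →
      cutWeight E w S ≤ cutWeight E w T)
    (hmin' : ∀ T : Finset V, T.Nonempty → T ≠ Finset.univ →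
      cutWeight E w Shat ≤ cutWeight E w T)
    (hstmin : ∀ T : Finset V, T.Nonempty → T ≠ Finset.univ →
      cutWeight
          (E ∪ (Finset.univ.filter (fun v => v ≠ s)).image (fun v => s(s, v)))
          (fun e => (Fintype.card V + 1) * (if e ∈ E then w e else 0) +
            (if ∃ v : V, v ∉ S ∧ e = s(s, v) then 1 else 0)) S ≤
        cutWeight
          (E ∪ (Finset.univ.filter (fun v => v ≠ s)).image (fun v => s(s, v)))
          (fun e => (Fintype.card V + 1) * (if e ∈ E then w e else 0) +
            (if ∃ v : V, v ∉ S ∧ e = s(s, v) then 1 else 0)) T) :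
    (Finset.univ \ S ⊂ Finset.univ \ Shat) ∧
      ∀ t : V, t ∉ S →
        let Gbar : Finset (Sym2 V) :=
          E ∪ (Finset.univ.filter (fun v => v ≠ t)).image (fun v => s(t, v))
        let wext : Sym2 V → ℕ := fun e => if e ∈ E then w e else 0
        let w₂ : Sym2 V → ℕ :=
          fun e => if ∃ v : V, v ∈ S ∧ e = s(t, v) then 1 else 0
        cutWeight Gbar w₂ S = S.card ∧
          cutWeight Gbar w₂ Shat = Shat.card ∧
          Shat.card < S.card ∧
          cutWeight Gbar wext S = cutWeight Gbar wext Shat ∧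
          ¬ (∀ T : Finset V, T.Nonempty → T ≠ Finset.univ →
            cutWeight Gbar (fun e => (Fintype.card V + 1) * wext e + w₂ e) S ≤
              cutWeight Gbar (fun e => (Fintype.card V + 1) * wext e + w₂ e) T) :=
  uniqueness_test_completeness_general E w s S Shat hs hshat hSne hpr hpr' hmin' hstmin
end
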